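/- Let a, b, c > 0 and m ≥ 3 satisfy 2a ≥ c, c ≥ a, 3a ≥ 2b + c, 2a ≥ 3b, and c ≥ 2b, and let β = (m−2)a + (m+1)b + (1/2)(m−3)(m−2)c + (m−1)c. Then for n with n − m ≥ 4 and m ≤ ⌈(n+1)/2⌉, and indices m < j_3 < ... < j_m ≤ n, the inequality a·x_{m−1} + b·x_m + c·∑_{i=3}^m x_{j_i} ≥ β is valid for all circuits x on {1,...,n}. -/

import Mathlib

/-!
Write `k = m - 3`, `y = x_{m-1}`, `z = x_m` and `S = ∑_{i=3}^m x_{j_i}`. The values of a circuit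
are distinct positive integers, so the `k + 1` values summed in `S`, together with none, one or
both of `y` and `z`, have sum at least the triangular number of their count. A circuit has no
fixed point and, as `n ≥ 3`, no 2-cycle; hence `y ≠ m - 1`, `z ≠ m` and `(y, z) ≠ (m, m - 1)`.
Splitting according to `y < m - 1`, `y = m`, `y > m` and `z < m - 1`, `z = m - 1`, `z > m`, each of
the eight admissible cases is a nonnegative combination of one triangular bound, the products
`(c - a)(m - 2 - y)`, `(c - b)(m - 2 - z)`, `a (y - m - 1)`, `b (z - m - 1)` and the coefficient
conditions.
-/

/-- A circuit on `{1,...,n}`: a permutation of `Fin n` that is a single `n`-cycle. -/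
def IsCircuitPerm {n : ℕ} (σ : Equiv.Perm (Fin n)) : Prop :=
  σ.IsCycle ∧ σ.support = Finset.univ

open Finset

theorem Finset.card_mul_card_add_one_le_two_mul_sum (s : Finset ℕ) (hs : 0 ∉ s) :
    #s * (#s + 1) ≤ 2 * ∑ x ∈ s, x := by
  induction s using Finset.induction_on_max with
  | empty => simp
  | insert a s hlt ih =>
    have ha : a ∉ s := fun h => (hlt a h).false
    have hsub : s ⊆ Ico 1 a := fun x hx =>
      mem_Ico.2 ⟨Nat.pos_of_ne_zero fun h => hs (h ▸ mem_insert_of_mem hx), hlt x hx⟩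
    have hcard : #s + 1 ≤ a := by
      have hle := card_le_card hsub
      have ha0 : a ≠ 0 := fun h => hs (h ▸ mem_insert_self a s)
      rw [Nat.card_Ico] at hle
      omega
    rw [card_insert_of_notMem ha, sum_insert ha]
    nlinarith [ih fun h => hs (mem_insert_of_mem h)]

theorem Finset.card_mul_card_add_one_le_two_mul_sum_of_injective {ι : Type*} (A : Finset ι)
    {f : ι → ℕ} (hf : Function.Injective f) (hf0 : ∀ i, f i ≠ 0) :
    #A * (#A + 1) ≤ 2 * ∑ i ∈ A, f i := by
  classical
  have h := (A.image f).card_mul_card_add_one_le_two_mul_sum (by simpa using fun i _ => hf0 i)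
  rwa [card_image_of_injective A hf, sum_image fun i _ j _ h => hf h] at h

namespace IsCircuitPerm

variable {n : ℕ} {σ : Equiv.Perm (Fin n)}

theorem apply_ne (hσ : IsCircuitPerm σ) (i : Fin n) : σ i ≠ i :=
  Equiv.Perm.mem_support.1 (hσ.2 ▸ mem_univ i)

theorem apply_apply_ne (hσ : IsCircuitPerm σ) (hn : 3 ≤ n) (i : Fin n) : σ (σ i) ≠ i := by
  intro h
  have hcard := Equiv.Perm.card_support_swap (hσ.apply_ne i).symm
  rw [← hσ.1.eq_swap_of_apply_apply_eq_self (hσ.apply_ne i) h, hσ.2, card_univ,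
    Fintype.card_fin] at hcard
  omega

end IsCircuitPerm

section LevelTwo

variable (k : ℕ) {a b c : ℝ} (ha : 0 < a) (hb : 0 < b)
    (h1 : c ≤ 2 * a) (h2 : a ≤ c) (h3 : 2 * b + c ≤ 3 * a) (h4 : 3 * b ≤ 2 * a)
    (h5 : 2 * b ≤ c)
include ha hb h1 h2 h3 h4 h5

theorem level_two_ineq_of_triangular_bounds {y z S : ℕ}
    (hy : y ≠ k + 2) (hz : z ≠ k + 3) (hswap : ¬(y = k + 3 ∧ z = k + 2))
    (hS : (k + 1) * (k + 2) ≤ 2 * S) (hSy : (k + 2) * (k + 3) ≤ 2 * (y + S))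
    (hSz : (k + 2) * (k + 3) ≤ 2 * (z + S)) (hSyz : (k + 3) * (k + 4) ≤ 2 * (y + (z + S))) :
    ((k : ℝ) + 1) * a + ((k : ℝ) + 4) * b + c * (((k : ℝ) + 1) * ((k : ℝ) + 2) / 2 + 1) ≤
      a * y + b * z + c * S := by
  rify at hS hSy hSz hSyz
  rcases (by omega : y ≤ k + 1 ∨ y = k + 3 ∨ k + 4 ≤ y) with hy | rfl | hy <;>
  rcases (by omega : z ≤ k + 1 ∨ z = k + 2 ∨ k + 4 ≤ z) with hz | rfl | hz
  all_goals first | exact absurd ⟨rfl, rfl⟩ hswap | (rify at hy hz ⊢; push_cast at *; nlinarith)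

theorem level_two_ineq_of_injective {ι : Type*} {x : ι → ℕ} (hx : Function.Injective x)
    (hx0 : ∀ i, x i ≠ 0) {T : Finset ι} (hT : #T = k + 1) {p q : ι} (hpq : p ≠ q)
    (hpT : p ∉ T) (hqT : q ∉ T)
    (hp : x p ≠ k + 2) (hq : x q ≠ k + 3) (hswap : ¬(x p = k + 3 ∧ x q = k + 2)) :
    ((k : ℝ) + 1) * a + ((k : ℝ) + 4) * b + c * (((k : ℝ) + 1) * ((k : ℝ) + 2) / 2 + 1) ≤
      a * x p + b * x q + c * ∑ i ∈ T, x i := by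
  classical
  have bound A := card_mul_card_add_one_le_two_mul_sum_of_injective A hx hx0
  have hpqT : p ∉ insert q T := by simp [hpq, hpT]
  exact_mod_cast level_two_ineq_of_triangular_bounds k ha hb h1 h2 h3 h4 h5 hp hq hswap
    (by simpa [hT] using bound T) (by simpa [hT, hpT] using bound (insert p T))
    (by simpa [hT, hqT] using bound (insert q T))
    (by simpa [hT, hpqT, hqT] using bound (insert p (insert q T)))

end LevelTwo

theorem stmt_16 (n m : ℕ) (a b c : ℝ) (ha : 0 < a) (hb : 0 < b)
    (h1 : c ≤ 2 * a) (h2 : a ≤ c) (h3 : 2 * b + c ≤ 3 * a) (h4 : 3 * b ≤ 2 * a)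
    (h5 : 2 * b ≤ c)
    (hm3 : 3 ≤ m) (hnm : 4 ≤ n - m)
    (T : Finset (Fin n)) (hT : T.card = m - 2) (hTi : ∀ j ∈ T, m ≤ (j : ℕ))
    (σ : Equiv.Perm (Fin n)) (hσ : IsCircuitPerm σ) :
    ((m : ℝ) - 2) * a + ((m : ℝ) + 1) * b + (1 / 2) * ((m : ℝ) - 3) * ((m : ℝ) - 2) * c +
        ((m : ℝ) - 1) * c ≤
      a * (((σ ⟨m - 2, by omega⟩ : Fin n) : ℕ) + 1 : ℝ) +
      b * (((σ ⟨m - 1, by omega⟩ : Fin n) : ℕ) + 1 : ℝ) +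
      c * ∑ j ∈ T, ((((σ j : Fin n) : ℕ) : ℝ) + 1) := by
  obtain ⟨k, rfl⟩ : ∃ k, m = k + 3 := ⟨m - 3, by omega⟩
  simp only [show k + 3 - 2 = k + 1 from rfl, show k + 3 - 1 = k + 2 from rfl]
  set p : Fin n := ⟨k + 1, by omega⟩
  set q : Fin n := ⟨k + 2, by omega⟩
  set x : Fin n → ℕ := fun i => σ i + 1
  have hx : Function.Injective x := fun i j h => σ.injective (Fin.ext (by simpa [x] using h))
  have hp : x p ≠ k + 2 := fun h => hσ.apply_ne p (Fin.ext (by simp [x, p] at h ⊢; omega))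
  have hq : x q ≠ k + 3 := fun h => hσ.apply_ne q (Fin.ext (by simp [x, q] at h ⊢; omega))
  have hswap : ¬(x p = k + 3 ∧ x q = k + 2) := fun ⟨h, h'⟩ => by
    have e : σ p = q := Fin.ext (by simp [x, q] at h ⊢; omega)
    have e' : σ q = p := Fin.ext (by simp [x, p] at h' ⊢; omega)
    exact hσ.apply_apply_ne (by omega) p (by rw [e, e'])
  have key := level_two_ineq_of_injective k ha hb h1 h2 h3 h4 h5 hx (by simp [x]) hT
    (by simp [p, q]) (fun h => by simpa [p] using hTi p h) (fun h => by simpa [q] using hTi q h)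
    hp hq hswap
  simp only [x] at key
  push_cast at key ⊢
  linarith
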